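/- arXiv:1706.05499 — 7 statements merged into one kernel-verified Lean document; each statement's English description precedes it below -/
import Mathlib

section
/- Let $X_1,\dots,X_{2n+1}$ be random variables on a common probability space such that $P(|X_i| > \tfrac{n}{n+1}a) > \tfrac{2n}{2n+1}$ for each $i$, where $a > 0$. Then $P(X_1 + \cdots + X_{2n+1} \ne 0) > 0$. -/
/-!
Each event `|X i| > n a / (n + 1)` fails with probability less than `1 / (2n + 1)`, so by the
union bound all `2n + 1` of them occur together with positive probability. There, since almost
surely `|X i| ≤ a`, some sign is shared by at least `n + 1` of the `X i`; these contribute more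
than `(n + 1) · n a / (n + 1) = n a` in absolute value, while the at most `n` others contribute
at most `n a`, so the sum cannot vanish.
-/

open MeasureTheory Finset
open scoped ENNReal

section MajorityOfSigns

variable {ι : Type*} [Fintype ι] {n : ℕ} {a : ℝ} {x : ι → ℝ}

lemma sum_pos_of_card_pos_ge (hcard : Fintype.card ι = 2 * n + 1) (ha : 0 ≤ a)
    (hle : ∀ i, -a ≤ x i) (hlt : ∀ i, 0 < x i → n / (n + 1) * a < x i)
    (hmaj : n + 1 ≤ #{i | 0 < x i}) : 0 < ∑ i, x i := by
  set P : Finset ι := {i | 0 < x i}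
  set N : Finset ι := {i | ¬0 < x i}
  have hPN : #P + #N = 2 * n + 1 := by rw [card_filter_add_card_filter_not, card_univ, hcard]
  have hP : (n + 1 : ℝ) ≤ #P := by exact_mod_cast hmaj
  have hN : (#N : ℝ) ≤ n := by exact_mod_cast (show #N ≤ n by omega)
  have hsumP : #P * (n / (n + 1) * a) < ∑ i ∈ P, x i := by
    have hPne : P.Nonempty := card_pos.mp (by omega)
    simpa using sum_lt_sum_of_nonempty hPne fun i hi => hlt i (mem_filter.mp hi).2
  have hsumN : #N * (-a) ≤ ∑ i ∈ N, x i := by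
    simpa using card_nsmul_le_sum N x (-a) fun i _ => hle i
  have hPa : n * a ≤ #P * (n / (n + 1) * a) := by
    calc (n : ℝ) * a = (n + 1) * (n / (n + 1) * a) := by field_simp
      _ ≤ #P * (n / (n + 1) * a) := by gcongr
  have hNa : n * (-a) ≤ #N * (-a) := mul_le_mul_of_nonpos_right hN (neg_nonpos.mpr ha)
  rw [← sum_filter_add_sum_filter_not univ (fun i => 0 < x i)]
  linarith

lemma sum_ne_zero_of_abs_bounds (hcard : Fintype.card ι = 2 * n + 1)
    (hle : ∀ i, |x i| ≤ a) (hlt : ∀ i, n / (n + 1) * a < |x i|) : ∑ i, x i ≠ 0 := by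
  have : Nonempty ι := Fintype.card_pos_iff.mp (by omega)
  have ha : 0 ≤ a := (abs_nonneg _).trans (hle (Classical.arbitrary ι))
  have hx0 : ∀ i, x i ≠ 0 := fun i h => by
    have := hlt i
    rw [h, abs_zero] at this
    exact this.not_ge (by positivity)
  have hsplit : #{i | 0 < x i} + #{i | 0 < -x i} = 2 * n + 1 := by
    rw [← hcard, ← card_univ, ← card_filter_add_card_filter_not (s := univ) (fun i => 0 < x i)]
    refine congrArg _ (congrArg card (filter_congr fun i _ => ?_))
    simp only [neg_pos, not_lt]
    exact ⟨le_of_lt, fun h => h.lt_of_ne (hx0 i)⟩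
  have hlt' : ∀ i, 0 < x i → n / (n + 1) * a < x i := fun i hi => abs_of_pos hi ▸ hlt i
  rcases le_or_gt (n + 1) #{i | 0 < x i} with hmaj | hmin
  · exact (sum_pos_of_card_pos_ge hcard ha (fun i => (abs_le.mp (hle i)).1) hlt' hmaj).ne'
  · have := sum_pos_of_card_pos_ge (x := fun i => -x i) hcard ha
      (fun i => neg_le_neg (abs_le.mp (hle i)).2)
      (fun i hi => by simpa using abs_of_pos hi ▸ abs_neg (x i) ▸ hlt i) (by omega)
    rw [sum_neg_distrib, neg_pos] at this
    exact this.ne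

end MajorityOfSigns

section UnionBound

variable {Ω ι : Type*} [MeasurableSpace Ω] {μ : Measure Ω} [IsProbabilityMeasure μ]

lemma measure_iInter_pos_of_sum_measure_compl_lt_one [Fintype ι] {A : ι → Set Ω}
    (h : ∑ i, μ (A i)ᶜ < 1) : 0 < μ (⋂ i, A i) := by
  refine pos_iff_ne_zero.mpr fun h0 => h.not_ge ?_
  calc 1 = μ ((⋂ i, A i) ∪ (⋂ i, A i)ᶜ) := by rw [Set.union_compl_self, measure_univ]
    _ ≤ μ (⋂ i, A i) + μ (⋃ i, (A i)ᶜ) := by rw [← Set.compl_iInter]; exact measure_union_le _ _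
    _ ≤ ∑ i, μ (A i)ᶜ := by rw [h0, zero_add]; exact measure_iUnion_fintype_le μ _

lemma measure_iInter_pos_of_measure_compl_lt_inv_card [Fintype ι] [Nonempty ι] {A : ι → Set Ω}
    (h : ∀ i, μ (A i)ᶜ < (Fintype.card ι : ℝ≥0∞)⁻¹) : 0 < μ (⋂ i, A i) := by
  refine measure_iInter_pos_of_sum_measure_compl_lt_one ?_
  calc ∑ i, μ (A i)ᶜ < ∑ _i : ι, (Fintype.card ι : ℝ≥0∞)⁻¹ :=
        ENNReal.sum_lt_sum_of_nonempty univ_nonempty fun i _ => h i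
    _ = 1 := by
      rw [sum_const, card_univ, nsmul_eq_mul, ENNReal.mul_inv_cancel] <;> simp

lemma measure_compl_lt_inv_of_ofReal_lt {s : Set Ω} (hs : MeasurableSet s) {m : ℕ}
    (h : ENNReal.ofReal (m / (m + 1)) < μ s) : μ sᶜ < ((m + 1 : ℕ) : ℝ≥0∞)⁻¹ := by
  have hinv : ((m + 1 : ℕ) : ℝ≥0∞)⁻¹ = ENNReal.ofReal (1 / (m + 1)) := by
    rw [one_div, ENNReal.ofReal_inv_of_pos (by positivity), ← ENNReal.ofReal_natCast]
    push_cast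
    rfl
  rw [prob_compl_eq_one_sub hs, ENNReal.sub_lt_iff_lt_right (measure_ne_top μ s) prob_le_one, hinv]
  calc 1 = ENNReal.ofReal (1 / (m + 1)) + ENNReal.ofReal (m / (m + 1)) := by
        rw [← ENNReal.ofReal_add (by positivity) (by positivity), ← add_div, add_comm,
          div_self (by positivity), ENNReal.ofReal_one]
    _ < ENNReal.ofReal (1 / (m + 1)) + μ s := ENNReal.add_lt_add_left ENNReal.ofReal_ne_top h

end UnionBound

theorem stmt2_general (n : ℕ) (a : ℝ)
    (Ω : Type*) [MeasurableSpace Ω] (μ : Measure Ω) [IsProbabilityMeasure μ]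
    (X : Fin (2 * n + 1) → Ω → ℝ) (hXm : ∀ i, Measurable (X i))
    (hbound : ∀ i, μ {ω | |X i ω| ≤ a} = 1)
    (htail : ∀ i, ENNReal.ofReal ((2 * n : ℝ) / (2 * n + 1)) <
      μ {ω | (n / (n + 1) : ℝ) * a < |X i ω|}) :
    0 < μ {ω | ∑ i, X i ω ≠ 0} := by
  have hbound_ae : ∀ᵐ ω ∂μ, ∀ i, |X i ω| ≤ a := ae_all_iff.mpr fun i =>
    (ae_iff_measure_eq (measurableSet_le (hXm i).abs measurable_const).nullMeasurableSet).mpr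
      (by rw [hbound i, measure_univ])
  have hinter : 0 < μ (⋂ i, {ω | (n / (n + 1) : ℝ) * a < |X i ω|}) :=
    measure_iInter_pos_of_measure_compl_lt_inv_card fun i => by
      simpa using measure_compl_lt_inv_of_ofReal_lt (m := 2 * n)
        (measurableSet_lt measurable_const (hXm i).abs) (by exact_mod_cast htail i)
  refine hinter.trans_le (measure_mono_ae ?_)
  filter_upwards [hbound_ae] with ω hle hlt
  exact sum_ne_zero_of_abs_bounds (Fintype.card_fin _) hle (Set.mem_iInter.mp hlt)

/-- If `P(|X i| > n a/(n+1)) > 2n/(2n+1)` for each of `2n+1` random variables with values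
in `[-a,a]` a.s., then `P(∑ X i ≠ 0) > 0`. -/
theorem stmt2 (n : ℕ) (hn : 1 ≤ n) (a : ℝ) (ha : 0 < a)
    (Ω : Type*) [MeasurableSpace Ω] (μ : Measure Ω) [IsProbabilityMeasure μ]
    (X : Fin (2 * n + 1) → Ω → ℝ) (hXm : ∀ i, Measurable (X i))
    (hbound : ∀ i, μ {ω | |X i ω| ≤ a} = 1)
    (htail : ∀ i, ENNReal.ofReal ((2 * n : ℝ) / (2 * n + 1)) <
      μ {ω | (n / (n + 1) : ℝ) * a < |X i ω|}) :
    0 < μ {ω | ∑ i, X i ω ≠ 0} :=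
  stmt2_general n a Ω μ X hXm hbound htail
end

section
/- Let $x_1,\dots,x_{2n+1}$ be real numbers with $\tfrac{n}{n+1}a < |x_i| \le a$ for all $i$, where $a > 0$ and $n \ge 1$. Then $x_1 + \cdots + x_{2n+1} \ne 0$. -/
lemma stmt3_aux (n : ℕ) (a : ℝ) (ha : 0 < a)
    (x : Fin (2 * n + 1) → ℝ)
    (h1 : ∀ i, (n / (n + 1) : ℝ) * a < |x i|)
    (h2 : ∀ i, |x i| ≤ a)
    (hP : n + 1 ≤ (Finset.univ.filter (fun i => 0 < x i)).card) :
    0 < ∑ i, x i := by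
  set P := Finset.univ.filter (fun i => 0 < x i) with hPdef
  have hsplit : ∑ i, x i = ∑ i ∈ P, x i + ∑ i ∈ Pᶜ, x i :=
    (Finset.sum_add_sum_compl P x).symm
  have hcardPc : (Pᶜ).card ≤ n := by
    have := Finset.card_compl P
    have hcard : Fintype.card (Fin (2 * n + 1)) = 2 * n + 1 := by simp
    omega
  have hne : P.Nonempty := Finset.card_pos.mp (by omega)
  have hlow : (P.card : ℝ) * ((n / (n + 1) : ℝ) * a) < ∑ i ∈ P, x i := by
    have := Finset.sum_lt_sum_of_nonempty hne (f := fun _ => (n / (n + 1) : ℝ) * a)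
      (g := x) (fun i hi => by
        have hxi : 0 < x i := by
          simpa [hPdef] using (Finset.mem_filter.mp hi).2
        have := h1 i
        rwa [abs_of_pos hxi] at this)
    rwa [Finset.sum_const, nsmul_eq_mul] at this
  have hlow2 : (n : ℝ) * a < ∑ i ∈ P, x i := by
    have h1' : ((n : ℝ) + 1) * ((n / (n + 1) : ℝ) * a) ≤
        (P.card : ℝ) * ((n / (n + 1) : ℝ) * a) := by
      apply mul_le_mul_of_nonneg_right
      · exact_mod_cast hP
      · positivity
    have heq : ((n : ℝ) + 1) * ((n / (n + 1) : ℝ) * a) = (n : ℝ) * a := by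
      field_simp
    linarith
  have hup : -((n : ℝ) * a) ≤ ∑ i ∈ Pᶜ, x i := by
    have hb : ∀ i ∈ Pᶜ, -a ≤ x i := fun i _ => neg_le_of_abs_le (h2 i)
    have := Finset.card_nsmul_le_sum Pᶜ x (-a) hb
    rw [nsmul_eq_mul] at this
    have hc : ((Pᶜ).card : ℝ) ≤ (n : ℝ) := by exact_mod_cast hcardPc
    nlinarith
  rw [hsplit]; linarith

/-- Deterministic lemma: `2n+1` reals with `n a/(n+1) < |x i| ≤ a` have nonzero sum. -/
theorem stmt3 (n : ℕ) (hn : 1 ≤ n) (a : ℝ) (ha : 0 < a)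
    (x : Fin (2 * n + 1) → ℝ)
    (h1 : ∀ i, (n / (n + 1) : ℝ) * a < |x i|)
    (h2 : ∀ i, |x i| ≤ a) :
    ∑ i, x i ≠ 0 := by
  set P := Finset.univ.filter (fun i => 0 < x i) with hPdef
  set N := Finset.univ.filter (fun i => 0 < -x i) with hNdef
  have hx0 : ∀ i, x i ≠ 0 := by
    intro i hi
    have := h1 i
    rw [hi, abs_zero] at this
    have : (0:ℝ) < (n / (n + 1) : ℝ) * a := by positivity
    linarith [h1 i, hi ▸ (abs_zero (α := ℝ))]
  have hcomp : N = Pᶜ := by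
    ext i
    simp only [hNdef, hPdef, Finset.mem_filter, Finset.mem_compl, Finset.mem_univ, true_and]
    constructor
    · intro h hP; linarith
    · intro h
      rcases lt_trichotomy (x i) 0 with h' | h' | h'
      · linarith
      · exact absurd h' (hx0 i)
      · exact absurd h' h
  have hcard : P.card + N.card = 2 * n + 1 := by
    rw [hcomp, Finset.card_add_card_compl]
    simp
  rcases le_or_gt (n + 1) P.card with h | h
  · have := stmt3_aux n a ha x h1 h2 h
    linarith
  · have hN : n + 1 ≤ N.card := by omega
    have := stmt3_aux n a ha (fun i => -x i) (fun i => by simpa using h1 i)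
      (fun i => by simpa using h2 i) (by simpa [hNdef] using hN)
    simp only [Finset.sum_neg_distrib] at this
    intro hc
    rw [hc] at this
    simp at this
end

section
/- Let $r$ be a positive integer, $a > 0$, and let $F$ be the distribution function on $\mathbb{R}$ given by $F(x) = 0$ for $x < -a$, $F(x) = \tfrac{1}{2a^{2r+1}}(x^{2r+1} + a^{2r+1})$ for $-a \le x < a$, and $F(x) = 1$ for $x \ge a$. Then $F(a/2) = \tfrac12 + \tfrac{1}{2^{2r+2}} < \tfrac23$, and consequently $F$ is not 3-completely mixable: there do not exist random variables $X_1, X_2, X_3$, each distributed according to $F$, with $X_1 + X_2 + X_3$ almost surely constant. -/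
/-!
Here `F (a/2) = 1/2 + 2^{-(2r+2)} ≤ 9/16`, and by the symmetry of `F` also
`F (-a/2) = 1 - F (a/2)`; so each `Xᵢ` exceeds `a/2`, and each lies below `-a/2`, with
probability greater than `1/3`. By the pigeonhole principle for measures, some outcome outside a
null set has two coordinates above `a/2` while the third is at least `-a`, forcing `C > 0`, and
another has two coordinates at most `-a/2` while the third is at most `a`, forcing `C ≤ 0`.
-/

open MeasureTheory Set

lemma Fin.add_sub_le_sum_three {x : Fin 3 → ℝ} {a : ℝ} (hx : ∀ l, -a ≤ x l) {i j : Fin 3}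
    (hij : i ≠ j) : x i + x j - a ≤ ∑ l, x l := by
  fin_cases i <;> fin_cases j <;> simp [Fin.sum_univ_three] at hij ⊢ <;>
    linarith [hx 0, hx 1, hx 2]

lemma one_div_two_pow_two_mul_add_two_le {r : ℕ} (hr : 1 ≤ r) :
    1 / 2 ^ (2 * r + 2) ≤ (1 / 16 : ℝ) := by
  rw [one_div_le_one_div (by positivity) (by norm_num)]
  calc (16 : ℝ) = 2 ^ 4 := by norm_num
    _ ≤ 2 ^ (2 * r + 2) := pow_le_pow_right₀ (by norm_num) (by omega)

lemma one_lt_sum_fin_three_ofReal {q : ℝ} (hq : 1 / 3 < q) :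
    1 < ∑ _ : Fin 3, ENNReal.ofReal q := by
  rw [Finset.sum_const, Finset.card_univ, Fintype.card_fin, nsmul_eq_mul,
    show ((3 : ℕ) : ENNReal) = ENNReal.ofReal 3 by simp, ← ENNReal.ofReal_mul (by norm_num),
    ENNReal.one_lt_ofReal]
  linarith

section
variable {Ω : Type*} [MeasurableSpace Ω] {μ : Measure Ω}

lemma exists_ne_mem_inter_of_measure_univ_lt_sum {ι : Type*} [Fintype ι] {A : ι → Set Ω}
    (hA : ∀ i, MeasurableSet (A i)) (h : μ univ < ∑ i, μ (A i)) {p : Ω → Prop}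
    (hp : ∀ᵐ ω ∂μ, p ω) : ∃ i j, i ≠ j ∧ ∃ ω ∈ A i ∩ A j, p ω := by
  have hp_null : NullMeasurableSet {ω | p ω} μ :=
    (NullMeasurableSet.of_null (ae_iff.1 hp)).of_compl
  obtain ⟨i, j, hij, ω, ⟨hi, hω⟩, hj, -⟩ :=
    exists_nonempty_inter_of_measure_univ_lt_tsum_measure μ
      (s := fun i => A i ∩ {ω | p ω}) (fun i => (hA i).nullMeasurableSet.inter hp_null)
      (by simpa only [tsum_fintype, measure_inter_conull hp] using h)
  exact ⟨i, j, hij, ω, ⟨hi, hj⟩, hω⟩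

lemma ae_le_of_measure_setOf_le_eq_zero {X : Ω → ℝ} {b : ℝ}
    (h : ∀ x < b, μ {ω | X ω ≤ x} = 0) : ∀ᵐ ω ∂μ, b ≤ X ω := by
  have hcover : {ω | ¬ b ≤ X ω} ⊆ ⋃ n : ℕ, {ω | X ω ≤ b - 1 / (n + 1)} := by
    intro ω hω
    obtain ⟨n, hn⟩ := exists_nat_one_div_lt (sub_pos.2 (not_le.1 hω))
    exact mem_iUnion.2 ⟨n, by show X ω ≤ _; linarith⟩
  exact ae_iff.2 <| measure_mono_null hcover <| measure_iUnion_null fun n =>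
    h _ (sub_lt_self b Nat.one_div_pos_of_nat)

theorem not_ae_sum_eq_of_tail_sums_gt_one [IsProbabilityMeasure μ] {X : Fin 3 → Ω → ℝ}
    (hX : ∀ i, Measurable (X i)) {a C : ℝ}
    (hbdd : ∀ i, ∀ᵐ ω ∂μ, X i ω ∈ Icc (-a) a)
    (hupper : 1 < ∑ i, μ {ω | a / 2 < X i ω}) (hlower : 1 < ∑ i, μ {ω | X i ω ≤ -a / 2}) :
    ¬ ∀ᵐ ω ∂μ, ∑ i, X i ω = C := by
  intro hC
  have hgood : ∀ᵐ ω ∂μ, ∑ i, X i ω = C ∧ ∀ i, X i ω ∈ Icc (-a) a := hC.and (ae_all_iff.2 hbdd)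
  have hC_pos : 0 < C := by
    obtain ⟨i, j, hij, ω, ⟨hi, hj⟩, hsum, hω⟩ := exists_ne_mem_inter_of_measure_univ_lt_sum
      (fun i => measurableSet_lt measurable_const (hX i)) (by rwa [measure_univ]) hgood
    linarith [Fin.add_sub_le_sum_three (fun l => (hω l).1) hij, hi.out, hj.out]
  have hC_nonpos : C ≤ 0 := by
    obtain ⟨i, j, hij, ω, ⟨hi, hj⟩, hsum, hω⟩ := exists_ne_mem_inter_of_measure_univ_lt_sum
      (fun i => measurableSet_le (hX i) measurable_const) (by rwa [measure_univ]) hgood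
    have := Fin.add_sub_le_sum_three (x := fun l => -X l ω) (fun l => neg_le_neg (hω l).2) hij
    rw [Finset.sum_neg_distrib] at this
    linarith [hi.out, hj.out]
  linarith

end

/-- Example 2.3: the bimodal symmetric distribution with `F(x) = (x^(2r+1)+a^(2r+1))/(2a^(2r+1))`
on `[-a,a)` satisfies `F(a/2) = 1/2 + 2^{-(2r+2)} < 2/3` and is not 3-completely mixable. -/
theorem stmt4 (r : ℕ) (hr : 1 ≤ r) (a : ℝ) (ha : 0 < a) (F : ℝ → ℝ)
    (hF : ∀ x : ℝ, F x =
      if x < -a then 0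
      else if x < a then (x ^ (2 * r + 1) + a ^ (2 * r + 1)) / (2 * a ^ (2 * r + 1))
      else 1) :
    F (a / 2) = 1 / 2 + 1 / 2 ^ (2 * r + 2) ∧ F (a / 2) < 2 / 3 ∧
    ¬ ∃ (Ω : Type) (_ : MeasurableSpace Ω) (μ : Measure Ω) (_ : IsProbabilityMeasure μ)
        (X : Fin 3 → Ω → ℝ) (C : ℝ),
        (∀ i, Measurable (X i)) ∧
        (∀ i x, μ {ω | X i ω ≤ x} = ENNReal.ofReal (F x)) ∧
        μ {ω | ∑ i, X i ω = C} = 1 := by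
  have ha_pow : a ^ (2 * r + 1) ≠ 0 := by positivity
  have hF_half : F (a / 2) = 1 / 2 + 1 / 2 ^ (2 * r + 2) := by
    rw [hF, if_neg (by linarith), if_pos (by linarith), div_pow, pow_succ 2 (2 * r + 1)]
    field_simp
    ring
  have hF_neg_half : F (-a / 2) = 1 / 2 - 1 / 2 ^ (2 * r + 2) := by
    rw [hF, if_neg (by linarith), if_pos (by linarith), neg_div, Odd.neg_pow ⟨r, rfl⟩, div_pow,
      pow_succ 2 (2 * r + 1)]
    field_simp
    ring
  have hsmall := one_div_two_pow_two_mul_add_two_le hr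
  refine ⟨hF_half, by linarith, ?_⟩
  rintro ⟨Ω, _, μ, _, X, C, hX, hcdf, hsum⟩
  have hbdd (i : Fin 3) : ∀ᵐ ω ∂μ, X i ω ∈ Icc (-a) a := by
    refine (ae_le_of_measure_setOf_le_eq_zero fun x hx => ?_).and
      ((mem_ae_iff_prob_eq_one (measurableSet_le (hX i) measurable_const)).2 ?_)
    · rw [hcdf, hF, if_pos hx, ENNReal.ofReal_zero]
    · rw [hcdf, hF, if_neg (by linarith), if_neg (lt_irrefl a), ENNReal.ofReal_one]
  have htail := one_lt_sum_fin_three_ofReal (q := 1 / 2 - 1 / 2 ^ (2 * r + 2)) (by linarith)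
  refine not_ae_sum_eq_of_tail_sums_gt_one hX hbdd ?_ ?_
    ((mem_ae_iff_prob_eq_one (measurableSet_eq_fun (by fun_prop) measurable_const)).2 hsum)
  · convert htail using 2 with i
    rw [show {ω | a / 2 < X i ω} = {ω | X i ω ≤ a / 2}ᶜ by ext; simp,
      prob_compl_eq_one_sub (measurableSet_le (hX i) measurable_const), hcdf, hF_half,
      ← ENNReal.ofReal_one, ← ENNReal.ofReal_sub _ (by positivity)]
    ring_nf
  · simpa only [hcdf, hF_neg_half] using htail
end

section
/- Let $n \ge 2$ and $\sigma_1,\dots,\sigma_n > 0$. There exists a real symmetric positive semidefinite $n \times n$ matrix $\Sigma$ with diagonal entries $\Sigma_{ii} = \sigma_i^2$ and $\sum_{i=1}^n \sum_{j=1}^n \Sigma_{ij} = 0$ if and only if $\sum_{i=1}^n \sigma_i \ge 2 \max_{1 \le i \le n} \sigma_i$. -/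
/-!
Positive semidefinite matrices are exactly Gram matrices, so the left-hand side asks for vectors
of lengths `σ i` summing to zero. If `∑ v i = 0`, the triangle inequality gives
`‖v k‖ ≤ ∑_{i ≠ k} ‖v i‖`. Conversely, split the indices other than a maximal one `k` into two
groups whose sums `a, b` differ by at most `σ k`; then `σ k, a, b` are the sides of a triangle
in `ℂ`, and letting each group point along one side closes the polygon.
-/

open Finset Matrix Complex
open scoped InnerProductSpace ComplexOrder

theorem Matrix.PosSemidef.exists_eq_gram {n 𝕜 : Type*} [Fintype n] [RCLike 𝕜]
    {A : Matrix n n 𝕜} (hA : A.PosSemidef) : ∃ v : n → EuclideanSpace 𝕜 n, A = gram 𝕜 v := by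
  classical
  obtain ⟨B, rfl⟩ : ∃ B : Matrix n n 𝕜, A = star B * B := by
    open scoped MatrixOrder Matrix.Norms.L2Operator in
    exact CStarAlgebra.nonneg_iff_eq_star_mul_self.mp hA.nonneg
  refine ⟨fun i => WithLp.toLp 2 fun l => B l i, ?_⟩
  ext i j
  simp [mul_apply, PiLp.inner_apply, mul_comm]

theorem Matrix.sum_sum_gram {n 𝕜 E : Type*} [Fintype n] [RCLike 𝕜] [SeminormedAddCommGroup E]
    [InnerProductSpace 𝕜 E] (v : n → E) :
    ∑ i, ∑ j, gram 𝕜 v i j = ⟪∑ i, v i, ∑ j, v j⟫_𝕜 := by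
  rw [sum_inner]
  simp only [inner_sum, gram_apply]

theorem two_mul_norm_le_sum_norm_of_sum_eq_zero {ι E : Type*} [Fintype ι]
    [SeminormedAddCommGroup E] {v : ι → E} (hv : ∑ i, v i = 0) (k : ι) :
    2 * ‖v k‖ ≤ ∑ i, ‖v i‖ := by
  classical
  have hk : v k = -∑ i ∈ univ.erase k, v i :=
    eq_neg_of_add_eq_zero_left ((add_sum_erase univ v (mem_univ k)).trans hv)
  have h_triangle : ‖v k‖ ≤ ∑ i ∈ univ.erase k, ‖v i‖ := by
    rw [hk, norm_neg]
    exact norm_sum_le _ v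
  rw [← add_sum_erase univ _ (mem_univ k)]
  linarith

theorem two_mul_iSup_le_sum_iff {ι : Type*} [Fintype ι] (f : ι → ℝ) :
    2 * ⨆ i, f i ≤ ∑ i, f i ↔ ∀ k, 2 * f k ≤ ∑ i, f i := by
  cases isEmpty_or_nonempty ι
  · simp [Real.iSup_of_isEmpty]
  · simp only [← le_div_iff₀' (two_pos : (0 : ℝ) < 2), ciSup_le_iff (Finite.bddAbove_range f)]

/-- Greedy balancing: put each new element on the lighter side. -/
theorem Finset.exists_subset_abs_two_mul_sum_sub_sum_le {ι : Type*} [DecidableEq ι]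
    (s : Finset ι) {f : ι → ℝ} {M : ℝ} (hM : 0 ≤ M) (hf : ∀ i ∈ s, 0 ≤ f i ∧ f i ≤ M) :
    ∃ t ⊆ s, |2 * ∑ i ∈ t, f i - ∑ i ∈ s, f i| ≤ M := by
  induction s using Finset.induction_on with
  | empty => exact ⟨∅, subset_rfl, by simpa using hM⟩
  | @insert a s ha ih =>
    obtain ⟨t, hts, ht⟩ := ih fun i hi => hf i (mem_insert_of_mem hi)
    obtain ⟨hfa₀, hfaM⟩ := hf a (mem_insert_self a s)
    rw [abs_le] at ht
    rw [sum_insert ha]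
    by_cases h_heavy : 0 ≤ 2 * ∑ i ∈ t, f i - ∑ i ∈ s, f i
    · exact ⟨t, hts.trans (subset_insert a s), abs_le.2 ⟨by linarith, by linarith⟩⟩
    · refine ⟨insert a t, insert_subset_insert a hts, ?_⟩
      rw [sum_insert fun hat => ha (hts hat)]
      exact abs_le.2 ⟨by linarith, by linarith⟩

theorem Complex.exists_triangle {a b c : ℝ} (h₁ : |a - b| ≤ c) (h₂ : c ≤ a + b) :
    ∃ p q : ℂ, ‖p‖ = 1 ∧ ‖q‖ = 1 ∧ c + a * p + b * q = 0 := by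
  have hf₀ : ‖(c : ℂ) + a * exp ((0 : ℝ) * I)‖ = |c + a| := by simp [← ofReal_add, norm_real]
  have hfπ : ‖(c : ℂ) + a * exp (Real.pi * I)‖ = |c - a| := by
    simp [← ofReal_sub, norm_real, ← sub_eq_add_neg]
  rw [abs_le] at h₁
  obtain ⟨θ, hθ⟩ : ∃ θ : ℝ, ‖(c : ℂ) + a * exp (θ * I)‖ = b := by
    refine intermediate_value_univ Real.pi 0 (by fun_prop) ⟨?_, ?_⟩
    · rw [hfπ, abs_le]; constructor <;> linarith
    · rw [hf₀]; linarith [le_abs_self (c + a)]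
  refine ⟨exp (θ * I), exp (arg (-(c + a * exp (θ * I))) * I), norm_exp_ofReal_mul_I θ,
    norm_exp_ofReal_mul_I _, ?_⟩
  rw [← hθ, ← norm_neg, norm_mul_exp_arg_mul_I, add_neg_cancel]

theorem Complex.exists_norm_eq_sum_eq_zero {ι : Type*} [Fintype ι] {σ : ι → ℝ}
    (hσ : ∀ i, 0 ≤ σ i) (h : ∀ k, 2 * σ k ≤ ∑ i, σ i) :
    ∃ v : ι → ℂ, (∀ i, ‖v i‖ = σ i) ∧ ∑ i, v i = 0 := by
  classical
  cases isEmpty_or_nonempty ι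
  · exact ⟨0, isEmptyElim, by simp⟩
  obtain ⟨k, hk⟩ := Finite.exists_max σ
  set s := univ.erase k
  obtain ⟨t, hts, ht⟩ :=
    s.exists_subset_abs_two_mul_sum_sub_sum_le (hσ k) fun i _ => ⟨hσ i, hk i⟩
  have hsplit : ∑ i ∈ s \ t, σ i + ∑ i ∈ t, σ i = ∑ i ∈ s, σ i := sum_sdiff hts
  have htotal : σ k + ∑ i ∈ s, σ i = ∑ i, σ i := add_sum_erase _ _ (mem_univ k)
  obtain ⟨p, q, hp, hq, hpq⟩ := Complex.exists_triangle (a := ∑ i ∈ t, σ i)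
    (b := ∑ i ∈ s \ t, σ i) (c := σ k) (by rw [← hsplit] at ht; convert ht using 2; ring)
    (by linarith [h k])
  let u : ι → ℂ := fun i => if i = k then 1 else if i ∈ t then p else q
  refine ⟨fun i => σ i * u i, fun i => ?_, ?_⟩
  · have hu : ‖u i‖ = 1 := by unfold u; split_ifs <;> simp [hp, hq]
    rw [norm_mul, hu, mul_one, norm_real, Real.norm_of_nonneg (hσ i)]
  · have hne : ∀ i ∈ s, i ≠ k := fun i hi => ne_of_mem_erase hi
    have hsum_t : ∑ i ∈ t, (σ i : ℂ) * u i = (∑ i ∈ t, σ i : ℝ) * p := by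
      push_cast
      rw [sum_mul]
      exact sum_congr rfl fun i hi => by simp [u, hne i (hts hi), hi]
    have hsum_sdiff : ∑ i ∈ s \ t, (σ i : ℂ) * u i = (∑ i ∈ s \ t, σ i : ℝ) * q := by
      push_cast
      rw [sum_mul]
      exact sum_congr rfl fun i hi => by simp [u, hne i (sdiff_subset hi), (mem_sdiff.1 hi).2]
    rw [← add_sum_erase _ _ (mem_univ k), ← sum_sdiff hts, hsum_t, hsum_sdiff]
    simp only [u, if_pos rfl, mul_one]
    linear_combination hpq

theorem stmt7_general (n : ℕ) (σ : Fin n → ℝ) (hσ : ∀ i, 0 < σ i) :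
    (∃ S : Matrix (Fin n) (Fin n) ℝ, S.IsSymm ∧ S.PosSemidef ∧
      (∀ i, S i i = σ i ^ 2) ∧ ∑ i, ∑ j, S i j = 0) ↔
    2 * (⨆ i, σ i) ≤ ∑ i, σ i := by
  rw [two_mul_iSup_le_sum_iff]
  constructor
  · rintro ⟨S, -, hS, hdiag, hsum⟩ k
    obtain ⟨v, rfl⟩ := hS.exists_eq_gram
    have hv : ∀ i, ‖v i‖ = σ i := fun i => by
      rw [← sq_eq_sq₀ (norm_nonneg _) (hσ i).le, ← hdiag i, gram_apply,
        real_inner_self_eq_norm_sq]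
    rw [sum_sum_gram, real_inner_self_eq_norm_sq, sq_eq_zero_iff, norm_eq_zero] at hsum
    simpa only [hv] using two_mul_norm_le_sum_norm_of_sum_eq_zero hsum k
  · intro h
    obtain ⟨v, hv, hsum⟩ := exists_norm_eq_sum_eq_zero (fun i => (hσ i).le) h
    refine ⟨gram ℝ v, isHermitian_iff_isSymm.1 (isHermitian_gram ℝ v), posSemidef_gram ℝ v,
      fun i => ?_, ?_⟩
    · rw [gram_apply, real_inner_self_eq_norm_sq, hv]
    · rw [sum_sum_gram, hsum, inner_zero_left]

/-- There exists a real symmetric PSD matrix with diagonal `σ i ^ 2` and all entries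
summing to zero iff `∑ σ i ≥ 2 max σ i`. -/
theorem stmt7 (n : ℕ) (hn : 2 ≤ n) (σ : Fin n → ℝ) (hσ : ∀ i, 0 < σ i) :
    (∃ S : Matrix (Fin n) (Fin n) ℝ, S.IsSymm ∧ S.PosSemidef ∧
      (∀ i, S i i = σ i ^ 2) ∧ ∑ i, ∑ j, S i j = 0) ↔
    2 * (⨆ i, σ i) ≤ ∑ i, σ i :=
  stmt7_general n σ hσ
end

section
/- Let $\mu \in \mathbb{R}$ and let $F$ be the distribution of $\theta Y + \mu$, where $Y$ has a continuous distribution with a density that is unimodal and symmetric about $0$, $\theta$ is a positive random variable independent of $Y$. Then for every $n \ge 2$, $F$ is $n$-completely mixable with center $\mu$: there exist random variables $X_1,\dots,X_n$, each distributed as $F$, with $P(X_1 + \cdots + X_n = n\mu) = 1$. -/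
/-!
Khintchine's representation: if `(Z, H)` is uniform on the region under the graph of `f`, then
`Z` has density `f`, and since `f` is even and unimodal, for a.e. height `h` the slice
`{z | h < f z}` is an interval `(-b h, b h)`. Uniform `(-1, 1)` is `n`-completely mixable by
measure-preserving maps summing to zero: pairs `(w, -w)`, and for odd `n` one extra triple
`(w, w - sign w, -2w + sign w)`. Conjugating these maps by `z ↦ z / b h` on every slice gives
`n` functions of `(Z, H)`, each distributed like `Y`, with sum `0`. Multiplying them by an
independent copy of `θ` and adding `m` gives the required mix of `θ Y + m`.
-/

open MeasureTheory ProbabilityTheory Set Filter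
open scoped ENNReal

/-- A complete mix of `μ` with centre `0` realised on the probability space `(ℝ, μ)` itself. -/
def HasZeroSumMaps (μ : Measure ℝ) (n : ℕ) : Prop :=
  ∃ T : Fin n → ℝ → ℝ, (∀ i, MeasurePreserving (T i) μ μ) ∧ ∀ w, ∑ i, T i w = 0

namespace HasZeroSumMaps

variable {μ : Measure ℝ}

theorem add {n k : ℕ} (hn : HasZeroSumMaps μ n) (hk : HasZeroSumMaps μ k) :
    HasZeroSumMaps μ (n + k) := by
  obtain ⟨T, hT, hTsum⟩ := hn
  obtain ⟨S, hS, hSsum⟩ := hk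
  refine ⟨Fin.append T S, Fin.addCases (by simpa using hT) (by simpa using hS), fun w => ?_⟩
  simp [Fin.sum_univ_add, hTsum, hSsum]

theorem two (hμ : MeasurePreserving Neg.neg μ μ) : HasZeroSumMaps μ 2 :=
  ⟨![id, Neg.neg], Fin.forall_fin_two.2 ⟨MeasurePreserving.id μ, hμ⟩, fun w => by simp⟩

end HasZeroSumMaps

theorem map_restrict_affine {a : ℝ} (c : ℝ) (ha : a ≠ 0) (s : Set ℝ) :
    (volume.restrict ((fun w => a * w + c) ⁻¹' s)).map (fun w => a * w + c) =
      ENNReal.ofReal |a⁻¹| • volume.restrict s := by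
  have he : MeasurableEmbedding (fun w : ℝ => a * w + c) :=
    ((Homeomorph.mulLeft₀ a ha).trans (Homeomorph.addRight c)).measurableEmbedding
  rw [← he.restrict_map, show (fun w : ℝ => a * w + c) = (· + c) ∘ (a * ·) from rfl,
    ← Measure.map_map (by fun_prop) (by fun_prop), Real.map_volume_mul_left ha,
    Measure.map_smul, map_add_right_eq_self, Measure.restrict_smul]

theorem map_restrict_Ioo_of_eqOn_affine_of_pos {T : ℝ → ℝ} {l r a c : ℝ} (ha : 0 < a)
    (hT : EqOn T (fun w => a * w + c) (Ioo l r)) :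
    (volume.restrict (Ioo l r)).map T =
      ENNReal.ofReal a⁻¹ • volume.restrict (Ioo (a * l + c) (a * r + c)) := by
  have hpre : (fun w => a * w + c) ⁻¹' Ioo (a * l + c) (a * r + c) = Ioo l r := by
    ext w
    simp only [mem_preimage, mem_Ioo, add_lt_add_iff_right, mul_lt_mul_iff_right₀ ha]
  rw [Measure.map_congr (ae_restrict_of_forall_mem measurableSet_Ioo hT), ← hpre,
    map_restrict_affine c ha.ne', abs_of_pos (inv_pos.2 ha)]

theorem map_restrict_Ioo_of_eqOn_affine_of_neg {T : ℝ → ℝ} {l r a c : ℝ} (ha : a < 0)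
    (hT : EqOn T (fun w => a * w + c) (Ioo l r)) :
    (volume.restrict (Ioo l r)).map T =
      ENNReal.ofReal (-a)⁻¹ • volume.restrict (Ioo (a * r + c) (a * l + c)) := by
  have hpre : (fun w => a * w + c) ⁻¹' Ioo (a * r + c) (a * l + c) = Ioo l r := by
    ext w
    simp only [mem_preimage, mem_Ioo, add_lt_add_iff_right, mul_lt_mul_left_of_neg ha]
    exact and_comm
  rw [Measure.map_congr (ae_restrict_of_forall_mem measurableSet_Ioo hT), ← hpre,
    map_restrict_affine c ha.ne, abs_inv, abs_of_neg ha]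

theorem restrict_Ioo_neg_one_one_eq_add :
    volume.restrict (Ioo (-1 : ℝ) 1) =
      volume.restrict (Ioo (-1) 0) + volume.restrict (Ioo 0 1) := by
  rw [Measure.restrict_congr_set (Ioo_ae_eq_Ioc (a := (-1 : ℝ)) (b := 0)),
    ← Measure.restrict_union (Ioc_disjoint_Ioi_same.mono_right Ioo_subset_Ioi_self)
      measurableSet_Ioo,
    Ioc_union_Ioo_eq_Ioo (by norm_num) (by norm_num)]

theorem Real.measurable_sign : Measurable Real.sign :=
  Measurable.ite measurableSet_Iio measurable_const
    (Measurable.ite measurableSet_Ioi measurable_const measurable_const)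

local notation "𝒰" => volume.restrict (Ioo (-1 : ℝ) 1)

theorem measurePreserving_neg_uniform : MeasurePreserving Neg.neg 𝒰 𝒰 := by
  refine ⟨measurable_neg, ?_⟩
  rw [map_restrict_Ioo_of_eqOn_affine_of_neg (a := -1) (c := 0) (by norm_num)
    (fun w _ => by simp)]
  norm_num

theorem measurePreserving_sub_sign_uniform :
    MeasurePreserving (fun w : ℝ => w - Real.sign w) 𝒰 𝒰 := by
  have hm : Measurable fun w : ℝ => w - Real.sign w := measurable_id.sub Real.measurable_sign
  refine ⟨hm, ?_⟩
  rw [restrict_Ioo_neg_one_one_eq_add, Measure.map_add _ _ hm,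
    map_restrict_Ioo_of_eqOn_affine_of_pos (a := 1) (c := 1) one_pos
      (fun w hw => by simp [Real.sign_of_neg hw.2]),
    map_restrict_Ioo_of_eqOn_affine_of_pos (a := 1) (c := -1) one_pos
      (fun w hw => by simp [Real.sign_of_pos hw.1, sub_eq_add_neg]), add_comm]
  norm_num

theorem measurePreserving_sign_sub_two_mul_uniform :
    MeasurePreserving (fun w : ℝ => -2 * w + Real.sign w) 𝒰 𝒰 := by
  have hm : Measurable fun w : ℝ => -2 * w + Real.sign w :=
    (measurable_id.const_mul _).add Real.measurable_sign
  refine ⟨hm, ?_⟩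
  conv_lhs => rw [restrict_Ioo_neg_one_one_eq_add]
  rw [Measure.map_add _ _ hm,
    map_restrict_Ioo_of_eqOn_affine_of_neg (a := -2) (c := -1) (by norm_num)
      (fun w hw => by simp [Real.sign_of_neg hw.2]),
    map_restrict_Ioo_of_eqOn_affine_of_neg (a := -2) (c := 1) (by norm_num)
      (fun w hw => by simp [Real.sign_of_pos hw.1])]
  norm_num [← add_smul, ← ENNReal.ofReal_add]

theorem hasZeroSumMaps_uniform_three : HasZeroSumMaps 𝒰 3 := by
  refine ⟨![id, fun w => w - Real.sign w, fun w => -2 * w + Real.sign w], ?_, fun w => ?_⟩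
  · simp only [Fin.forall_fin_succ, Fin.isValue, Matrix.cons_val_zero, Matrix.cons_val_succ,
      IsEmpty.forall_iff, and_true]
    exact ⟨MeasurePreserving.id _, measurePreserving_sub_sign_uniform,
      measurePreserving_sign_sub_two_mul_uniform⟩
  · simp only [Fin.sum_univ_three, Matrix.cons_val_zero, Matrix.cons_val_one,
      Matrix.cons_val_two, Matrix.head_cons, Matrix.tail_cons, id_eq]
    ring

theorem hasZeroSumMaps_uniform : ∀ n, 2 ≤ n → HasZeroSumMaps 𝒰 n
  | 2, _ => .two measurePreserving_neg_uniform
  | 3, _ => hasZeroSumMaps_uniform_three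
  | n + 4, _ => (hasZeroSumMaps_uniform (n + 2) (by omega)).add (.two measurePreserving_neg_uniform)

theorem MeasureTheory.MeasurePreserving.conj_mul_uniform {T : ℝ → ℝ}
    (hT : MeasurePreserving T 𝒰 𝒰) {b : ℝ} (hb : 0 < b) :
    MeasurePreserving (fun z => b * T (z / b)) (volume.restrict (Ioo (-b) b))
      (volume.restrict (Ioo (-b) b)) := by
  have hscale : volume.restrict (Ioo (-b) b) = ENNReal.ofReal b • Measure.map (b * ·) 𝒰 := by
    rw [map_restrict_Ioo_of_eqOn_affine_of_pos (a := b) (c := 0) hb (fun _ _ => by simp),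
      smul_smul, ← ENNReal.ofReal_mul hb.le, mul_inv_cancel₀ hb.ne']
    simp
  have hcomm : (fun z => b * T (z / b)) ∘ (b * ·) = (b * ·) ∘ T := by
    ext w; simp [mul_div_cancel_left₀ w hb.ne']
  have hm : Measurable fun z => b * T (z / b) :=
    (hT.measurable.comp (measurable_id.div_const b)).const_mul b
  refine ⟨hm, ?_⟩
  rw [hscale, Measure.map_smul, Measure.map_map hm (measurable_const_mul b), hcomm,
    ← Measure.map_map (measurable_const_mul b) hT.measurable, hT.map_eq]

theorem ae_eq_Ioo_of_ordConnected_of_neg_mem {s : Set ℝ} (hs : s.OrdConnected)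
    (hneg : ∀ x ∈ s, -x ∈ s) (hfin : volume s ≠ ∞) :
    s =ᵐ[volume] Ioo (-(volume (s ∩ Ici 0)).toReal) (volume (s ∩ Ici 0)).toReal := by
  set c := (volume (s ∩ Ici 0)).toReal
  have hfin' : volume (s ∩ Ici 0) ≠ ∞ := ne_top_of_le_ne_top hfin (measure_mono inter_subset_left)
  have hIcc : ∀ x ∈ s, Icc (-|x|) |x| ⊆ s := fun x hx => by
    rcases abs_choice x with h | h <;> rw [h]
    · exact hs.out (hneg x hx) hx
    · rw [neg_neg]; exact hs.out hx (hneg x hx)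
  have hle : ∀ x ∈ s, |x| ≤ c := fun x hx => by
    have hsub : Icc 0 |x| ⊆ s ∩ Ici 0 := fun y hy =>
      ⟨hIcc x hx ⟨by linarith [hy.1, abs_nonneg x], hy.2⟩, hy.1⟩
    simpa using ENNReal.toReal_mono hfin' (measure_mono hsub)
  have hlt : ∀ x, |x| < c → x ∈ s := fun x hx => by
    by_contra hxs
    have hsub : s ∩ Ici 0 ⊆ Ico 0 |x| := fun y ⟨hy, hy0⟩ => ⟨hy0, lt_of_not_ge fun hxy =>
      hxs (hIcc y hy (by rw [abs_of_nonneg hy0]; exact abs_le.1 hxy))⟩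
    have : c ≤ |x| := by
      simpa using ENNReal.toReal_mono (by simp : volume (Ico 0 |x|) ≠ ∞) (measure_mono hsub)
    linarith
  have hle_ae : s ≤ᵐ[volume] Icc (-c) c := Eventually.of_forall fun x hx => abs_le.1 (hle x hx)
  exact (hle_ae.trans Ioo_ae_eq_Icc.symm.le).antisymm
    (Eventually.of_forall fun x hx => hlt x (abs_lt.2 hx))

noncomputable def sliceHalfWidth (S : Set (ℝ × ℝ)) (h : ℝ) : ℝ :=
  (volume ({z | (z, h) ∈ S} ∩ Ici 0)).toReal

noncomputable def sliceMap (S : Set (ℝ × ℝ)) (T : ℝ → ℝ) (p : ℝ × ℝ) : ℝ × ℝ :=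
  (sliceHalfWidth S p.2 * T (p.1 / sliceHalfWidth S p.2), p.2)

theorem measurable_sliceHalfWidth {S : Set (ℝ × ℝ)} (hS : MeasurableSet S) :
    Measurable (sliceHalfWidth S) :=
  (measurable_measure_prodMk_right (hS.inter (measurableSet_le measurable_const measurable_fst))
    ).ennreal_toReal

theorem measurePreserving_sliceMap {S : Set (ℝ × ℝ)} (hS : MeasurableSet S)
    (hfin : volume S ≠ ∞) (hconn : ∀ h, {z | (z, h) ∈ S}.OrdConnected)
    (hneg : ∀ z h, (z, h) ∈ S → (-z, h) ∈ S) {T : ℝ → ℝ} (hT : MeasurePreserving T 𝒰 𝒰) :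
    MeasurePreserving (sliceMap S T) (volume.restrict S) (volume.restrict S) := by
  set b := sliceHalfWidth S
  have hslice : ∀ᵐ h, {z | (z, h) ∈ S} =ᵐ[volume] Ioo (-b h) (b h) := by
    have hfin_slice : ∀ᵐ h, volume {z | (z, h) ∈ S} < ∞ :=
      ae_lt_top (measurable_measure_prodMk_right hS)
        ((Measure.prod_apply_symm hS).symm.trans_ne hfin)
    filter_upwards [hfin_slice] with h hh
    exact ae_eq_Ioo_of_ordConnected_of_neg_mem (hconn h) (fun z hz => hneg z h hz) hh.ne
  have hm : Measurable (sliceMap S T) :=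
    (((measurable_sliceHalfWidth hS).comp measurable_snd).mul (hT.measurable.comp
      (measurable_fst.div ((measurable_sliceHalfWidth hS).comp measurable_snd)))).prodMk
      measurable_snd
  refine ⟨hm, Measure.ext fun A hA => ?_⟩
  rw [Measure.map_apply hm hA, Measure.restrict_apply (hm hA), Measure.restrict_apply hA,
    Measure.volume_eq_prod, Measure.prod_apply_symm ((hm hA).inter hS),
    Measure.prod_apply_symm (hA.inter hS)]
  refine lintegral_congr_ae ?_
  filter_upwards [hslice] with h hh
  change volume ((fun z => b h * T (z / b h)) ⁻¹' {z | (z, h) ∈ A} ∩ {z | (z, h) ∈ S}) =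
    volume ({z | (z, h) ∈ A} ∩ {z | (z, h) ∈ S})
  rw [measure_congr (ae_eq_set_inter (ae_eq_refl
      ((fun z => b h * T (z / b h)) ⁻¹' {z | (z, h) ∈ A})) hh),
    measure_congr (ae_eq_set_inter (ae_eq_refl {z | (z, h) ∈ A}) hh)]
  rcases le_or_gt (b h) 0 with hb | hb
  · simp [Ioo_eq_empty (by linarith : ¬ -b h < b h)]
  · rw [← Measure.restrict_apply' measurableSet_Ioo, ← Measure.restrict_apply' measurableSet_Ioo]
    exact (hT.conj_mul_uniform hb).measure_preimage (measurable_prodMk_right hA).nullMeasurableSet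

section SymmetricUnimodal

variable {f : ℝ → ℝ}

theorem measurable_of_even_of_antitoneOn (heven : Function.Even f)
    (hanti : AntitoneOn f (Ici 0)) : Measurable f := by
  have hmono : Antitone fun x => f (max x 0) := fun x y hxy =>
    hanti (le_max_right x 0) (le_max_right y 0) (max_le_max hxy le_rfl)
  have hf : f = (fun x => f (max x 0)) ∘ abs := by
    ext x
    rcases le_total 0 x with hx | hx
    · simp [abs_of_nonneg hx, hx]
    · simp [abs_of_nonpos hx, neg_nonneg.2 hx, heven x]
  rw [hf]
  exact hmono.measurable.comp measurable_abs

theorem min_le_of_even_of_antitoneOn (heven : Function.Even f) (hanti : AntitoneOn f (Ici 0))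
    {x y z : ℝ} (hz : z ∈ Icc x y) : min (f x) (f y) ≤ f z := by
  rcases le_total 0 z with h | h
  · exact (min_le_right _ _).trans (hanti h (h.trans hz.2) hz.2)
  · rw [← heven x, ← heven z]
    exact (min_le_left _ _).trans
      (hanti (neg_nonneg.2 h) (neg_nonneg.2 h |>.trans (neg_le_neg hz.1)) (neg_le_neg hz.1))

theorem ordConnected_slice_regionBetween (heven : Function.Even f)
    (hanti : AntitoneOn f (Ici 0)) (h : ℝ) :
    {z | (z, h) ∈ regionBetween 0 f univ}.OrdConnected :=
  ⟨fun _ hx _ hy _ hz => ⟨trivial, hx.2.1,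
    lt_min hx.2.2 hy.2.2 |>.trans_le (min_le_of_even_of_antitoneOn heven hanti hz)⟩⟩

theorem map_fst_restrict_regionBetween (hf : Measurable f) :
    (volume.restrict (regionBetween 0 f univ)).map Prod.fst =
      volume.withDensity fun x => ENNReal.ofReal (f x) := by
  ext s hs
  have hreg : Prod.fst ⁻¹' s ∩ regionBetween 0 f univ = regionBetween 0 f s := by
    ext p; simp [regionBetween]
  rw [Measure.map_apply measurable_fst hs, Measure.restrict_apply (measurable_fst hs), hreg,
    Measure.volume_eq_prod, volume_regionBetween_eq_lintegral' measurable_zero hf hs,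
    withDensity_apply _ hs]
  simp

end SymmetricUnimodal

theorem map_eq_withDensity_of_cdf {Ω : Type*} [MeasurableSpace Ω] {μ : Measure Ω}
    [IsProbabilityMeasure μ] {Y : Ω → ℝ} (hY : Measurable Y) {f : ℝ → ℝ} (hf : ∀ x, 0 ≤ f x)
    (hcdf : ∀ x, μ {ω | Y ω ≤ x} = ENNReal.ofReal (∫ t in Iic x, f t)) :
    μ.map Y = volume.withDensity fun x => ENNReal.ofReal (f x) := by
  have : IsProbabilityMeasure (μ.map Y) := Measure.isProbabilityMeasure_map hY.aemeasurable
  have hint : ∀ x, IntegrableOn f (Iic x) := by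
    intro x
    by_contra hx
    have hzero : ∀ y ≥ x, μ.map Y (Iic y) = 0 := fun y hy => by
      rw [Measure.map_apply hY measurableSet_Iic]
      have hy' : ¬IntegrableOn f (Iic y) := fun hy' => hx (hy'.mono_set (Iic_subset_Iic.2 hy))
      exact (hcdf y).trans (by simp [integral_undef hy'])
    have hlim := tendsto_measure_Iic_atTop (μ.map Y)
    rw [measure_univ] at hlim
    exact one_ne_zero (tendsto_nhds_unique hlim
      (tendsto_const_nhds.congr' ((eventually_ge_atTop x).mono fun y hy => (hzero y hy).symm)))
  refine Measure.ext_of_Iic _ _ fun x => ?_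
  rw [Measure.map_apply hY measurableSet_Iic, withDensity_apply _ measurableSet_Iic,
    ← ofReal_integral_eq_lintegral_ofReal (hint x) (Eventually.of_forall hf)]
  exact hcdf x

theorem exists_scaleMixture_of_sum_eq_zero {Ω₀ : Type*} [MeasurableSpace Ω₀] {μ₀ : Measure Ω₀}
    [IsProbabilityMeasure μ₀] {Y θ : Ω₀ → ℝ} (hY : Measurable Y) (hθ : Measurable θ)
    (hindep : IndepFun θ Y μ₀) {P : Type} [MeasurableSpace P] {ρ : Measure P}
    [IsProbabilityMeasure ρ] {n : ℕ} {Z : Fin n → P → ℝ} (hZ : ∀ i, Measurable (Z i))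
    (hZY : ∀ i, ρ.map (Z i) = μ₀.map Y) (hsum : ∀ p, ∑ i, Z i p = 0) (m : ℝ) :
    ∃ (Ω : Type) (_ : MeasurableSpace Ω) (μ : Measure Ω) (_ : IsProbabilityMeasure μ)
      (X : Fin n → Ω → ℝ), (∀ i, Measurable (X i)) ∧
      (∀ i, μ.map (X i) = μ₀.map fun ω => θ ω * Y ω + m) ∧ ∀ ω, ∑ i, X i ω = n * m := by
  have hg : Measurable fun q : ℝ × ℝ => q.1 * q.2 + m := by fun_prop
  have : IsProbabilityMeasure (μ₀.map θ) := Measure.isProbabilityMeasure_map hθ.aemeasurable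
  refine ⟨ℝ × P, inferInstance, (μ₀.map θ).prod ρ, inferInstance,
    fun i q => q.1 * Z i q.2 + m, fun i => by fun_prop, fun i => ?_, fun q => ?_⟩
  · change ((μ₀.map θ).prod ρ).map (fun q : ℝ × P => q.1 * Z i q.2 + m) = _
    have hcomp : (fun q : ℝ × P => q.1 * Z i q.2 + m) =
        (fun q : ℝ × ℝ => q.1 * q.2 + m) ∘ Prod.map id (Z i) := rfl
    rw [hcomp, ← Measure.map_map hg (measurable_id.prodMap (hZ i)),
      ← Measure.map_prod_map _ _ measurable_id (hZ i), Measure.map_id, hZY i,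
      ← (indepFun_iff_map_prod_eq_prod_map_map hθ.aemeasurable hY.aemeasurable).1 hindep,
      Measure.map_map hg (hθ.prodMk hY)]
    rfl
  · simp [Finset.sum_add_distrib, ← Finset.mul_sum, hsum]

theorem stmt9_general (m : ℝ)
    (Ω₀ : Type*) [MeasurableSpace Ω₀] (μ₀ : Measure Ω₀) [IsProbabilityMeasure μ₀]
    (Y θ : Ω₀ → ℝ) (hYm : Measurable Y) (hθm : Measurable θ)
    (hindep : IndepFun θ Y μ₀)
    (f : ℝ → ℝ) (hf_nonneg : ∀ x, 0 ≤ f x) (hf_symm : ∀ x, f (-x) = f x)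
    (hf_unimodal : AntitoneOn f (Set.Ici 0))
    (hYdens : ∀ x, μ₀ {ω | Y ω ≤ x} = ENNReal.ofReal (∫ t in Set.Iic x, f t))
    (F : ℝ → ℝ) (hF : ∀ x, F x = (μ₀ {ω | θ ω * Y ω + m ≤ x}).toReal)
    (n : ℕ) (hn : 2 ≤ n) :
    ∃ (Ω : Type) (_ : MeasurableSpace Ω) (μ : Measure Ω) (_ : IsProbabilityMeasure μ)
      (X : Fin n → Ω → ℝ),
      (∀ i, Measurable (X i)) ∧
      (∀ i x, μ {ω | X i ω ≤ x} = ENNReal.ofReal (F x)) ∧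
      μ {ω | ∑ i, X i ω = n * m} = 1 := by
  set S := regionBetween 0 f univ
  have hfm : Measurable f := measurable_of_even_of_antitoneOn hf_symm hf_unimodal
  have hS : MeasurableSet S := measurableSet_regionBetween measurable_zero hfm .univ
  have hlaw : (volume.restrict S).map Prod.fst = μ₀.map Y := by
    rw [map_fst_restrict_regionBetween hfm, map_eq_withDensity_of_cdf hYm hf_nonneg hYdens]
  have : IsProbabilityMeasure (volume.restrict S) := by
    constructor
    simpa [Measure.map_apply measurable_fst .univ, Measure.map_apply hYm .univ] using
      congrArg (· univ) hlaw
  have hfin : volume S ≠ ∞ := by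
    rw [← Measure.restrict_apply_univ]; exact measure_ne_top _ _
  obtain ⟨T, hT, hTsum⟩ := hasZeroSumMaps_uniform n hn
  have hΦ i := measurePreserving_sliceMap hS hfin
    (ordConnected_slice_regionBetween hf_symm hf_unimodal)
    (fun z h hz => by simpa [S, regionBetween, hf_symm z] using hz) (hT i)
  obtain ⟨Ω, _, μ, _, X, hXm, hXlaw, hXsum⟩ := exists_scaleMixture_of_sum_eq_zero hYm hθm hindep
    (Z := fun i p => (sliceMap S (T i) p).1) (fun i => measurable_fst.comp (hΦ i).measurable)
    (fun i => by
      rw [← hlaw, ← (hΦ i).map_eq, Measure.map_map measurable_fst (hΦ i).measurable]; rfl)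
    (fun p => by simp [sliceMap, ← Finset.mul_sum, hTsum]) m
  refine ⟨Ω, _, μ, ‹_›, X, hXm, fun i x => ?_, by simp [hXsum]⟩
  have hcdf := congrArg (· (Iic x)) (hXlaw i)
  rw [hF, ENNReal.ofReal_toReal (measure_ne_top _ _)]
  rwa [Measure.map_apply (hXm i) measurableSet_Iic,
    Measure.map_apply (by fun_prop) measurableSet_Iic] at hcdf

/-- Corollary 2.1: a scale mixture of a continuous distribution with unimodal symmetric
density, shifted by `m`, is `n`-completely mixable with center `m` for all `n ≥ 2`. -/
theorem stmt9 (m : ℝ)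
    (Ω₀ : Type*) [MeasurableSpace Ω₀] (μ₀ : Measure Ω₀) [IsProbabilityMeasure μ₀]
    (Y θ : Ω₀ → ℝ) (hYm : Measurable Y) (hθm : Measurable θ)
    (hθpos : ∀ᵐ ω ∂μ₀, 0 < θ ω) (hindep : IndepFun θ Y μ₀)
    (f : ℝ → ℝ) (hf_nonneg : ∀ x, 0 ≤ f x) (hf_symm : ∀ x, f (-x) = f x)
    (hf_unimodal : AntitoneOn f (Set.Ici 0))
    (hYdens : ∀ x, μ₀ {ω | Y ω ≤ x} = ENNReal.ofReal (∫ t in Set.Iic x, f t))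
    (F : ℝ → ℝ) (hF : ∀ x, F x = (μ₀ {ω | θ ω * Y ω + m ≤ x}).toReal)
    (n : ℕ) (hn : 2 ≤ n) :
    ∃ (Ω : Type) (_ : MeasurableSpace Ω) (μ : Measure Ω) (_ : IsProbabilityMeasure μ)
      (X : Fin n → Ω → ℝ),
      (∀ i, Measurable (X i)) ∧
      (∀ i x, μ {ω | X i ω ≤ x} = ENNReal.ofReal (F x)) ∧
      μ {ω | ∑ i, X i ω = n * m} = 1 :=
  stmt9_general m Ω₀ μ₀ Y θ hYm hθm hindep f hf_nonneg hf_symm hf_unimodal hYdens F hF n hn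
end

section
/- Let $n \ge 2$ and $\mu_i \in \mathbb{R}$, $\sigma_i > 0$ for $i=1,\dots,n$ with $\sum_{i=1}^n \sigma_i \ge 2\max_i \sigma_i$. Then the normal distributions $N(\mu_1,\sigma_1^2),\dots,N(\mu_n,\sigma_n^2)$ are jointly mixable: there exist jointly Gaussian random variables $X_i \sim N(\mu_i,\sigma_i^2)$ with $P(X_1+\cdots+X_n = \mu_1+\cdots+\mu_n) = 1$. -/
/-!
Gaussian vectors with a prescribed positive semidefinite covariance matrix `S` exist, and every
linear image of one is Gaussian; in particular `∑ Xᵢ` has variance `1ᵀ S 1`. So it suffices to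
find a positive semidefinite `S` with diagonal `σᵢ²` and `1ᵀ S 1 = 0`. The Gram matrix of plane
vectors `wᵢ` with `‖wᵢ‖ = σᵢ` and `∑ wᵢ = 0` is one, and such vectors are the sides of a closed
polygon with side lengths `σᵢ`, which exists because no `σᵢ` exceeds the sum of the others.
-/

open MeasureTheory ProbabilityTheory

namespace Complex

theorem exists_norm_eq_one_mul_eq_norm (z : ℂ) : ∃ c : ℂ, ‖c‖ = 1 ∧ c * z = ‖z‖ := by
  refine ⟨exp (↑(-z.arg) * I), norm_exp_ofReal_mul_I _, ?_⟩
  calc exp (↑(-z.arg) * I) * z = exp (↑(-z.arg) * I) * (‖z‖ * exp (z.arg * I)) := by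
        rw [norm_mul_exp_arg_mul_I]
    _ = ‖z‖ := by rw [mul_left_comm, ← exp_add]; simp

theorem exists_norm_eq_norm_ofReal_add_eq {ρ ℓ d : ℝ} (hρ : 0 ≤ ρ) (hℓ : 0 ≤ ℓ)
    (hd₁ : |ρ - ℓ| ≤ d) (hd₂ : d ≤ ρ + ℓ) : ∃ u : ℂ, ‖u‖ = ℓ ∧ ‖(ρ : ℂ) + u‖ = d := by
  set f : ℝ → ℝ := fun θ ↦ ‖(ρ : ℂ) + ℓ * exp (θ * I)‖
  have hf₀ : f 0 = ρ + ℓ := by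
    simp [f, ← ofReal_add, abs_of_nonneg (add_nonneg hρ hℓ)]
  have hfπ : f Real.pi = |ρ - ℓ| := by
    simp [f, ← sub_eq_add_neg, ← ofReal_sub]
  obtain ⟨θ, -, hθ⟩ := intermediate_value_Icc' Real.pi_pos.le (f := f) (by fun_prop)
    (show d ∈ Set.Icc (f Real.pi) (f 0) by rw [hf₀, hfπ]; exact ⟨hd₁, hd₂⟩)
  exact ⟨ℓ * exp (θ * I), by simp [abs_of_nonneg hℓ], hθ⟩

open Finset in
-- `hds` and `hpoly` are the polygon inequalities for the side lengths `ℓᵢ` together with `d`.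
theorem exists_norm_eq_sum_eq_ofReal {ι : Type*} [DecidableEq ι] (s : Finset ι)
    (ℓ : ι → ℝ) (hℓ : ∀ i ∈ s, 0 ≤ ℓ i) {d : ℝ} (hd : 0 ≤ d) (hds : d ≤ ∑ i ∈ s, ℓ i)
    (hpoly : ∀ i ∈ s, 2 * ℓ i ≤ d + ∑ j ∈ s, ℓ j) :
    ∃ w : ι → ℂ, (∀ i ∈ s, ‖w i‖ = ℓ i) ∧ ∑ i ∈ s, w i = d := by
  induction s using Finset.induction_on generalizing d with
  | empty => exact ⟨0, by simp, by simp at hds; simp [le_antisymm hds hd]⟩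
  | @insert a s ha ih =>
    simp only [mem_insert, forall_eq_or_imp, sum_insert ha] at hℓ hds hpoly
    have hL : ∀ i ∈ s, ℓ i ≤ ∑ j ∈ s, ℓ j := fun i hi ↦ single_le_sum hℓ.2 hi
    have hL₀ : 0 ≤ ∑ j ∈ s, ℓ j := sum_nonneg hℓ.2
    -- `ρ = min (∑ j ∈ s, ℓ j) (ℓ a + d)`: the sides in `s` close up against `ρ`, and
    -- `ρ`, `ℓ a`, `d` satisfy the triangle inequalities
    obtain ⟨ρ, hρ, hρL, hρa⟩ : ∃ ρ, (ρ = ∑ j ∈ s, ℓ j ∨ ρ = ℓ a + d) ∧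
        ρ ≤ ∑ j ∈ s, ℓ j ∧ ρ ≤ ℓ a + d :=
      ⟨_, min_choice _ _, min_le_left _ _, min_le_right _ _⟩
    have hρ₀ : 0 ≤ ρ := by rcases hρ with h | h <;> linarith
    obtain ⟨v, hv, hvs⟩ := ih hℓ.2 hρ₀ hρL fun i hi ↦ by
      have := hL i hi; have := hpoly.2 i hi; rcases hρ with h | h <;> linarith
    obtain ⟨u, hu, hρu⟩ := exists_norm_eq_norm_ofReal_add_eq (d := d) hρ₀ hℓ.1
      (abs_sub_le_iff.2 ⟨by linarith, by rcases hρ with h | h <;> linarith⟩)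
      (by rcases hρ with h | h <;> linarith)
    obtain ⟨c, hc, hcz⟩ := exists_norm_eq_one_mul_eq_norm ((ρ : ℂ) + u)
    refine ⟨fun i ↦ c * if i = a then u else v i, fun i hi ↦ ?_, ?_⟩
    · rcases mem_insert.1 hi with rfl | hi
      · simp [hc, hu]
      · simp [hc, ne_of_mem_of_not_mem hi ha, hv i hi]
    · rw [sum_insert ha, if_pos rfl, ← hρu, ← hcz, ← hvs, sum_congr rfl fun i hi ↦ by
        rw [if_neg (ne_of_mem_of_not_mem hi ha)], ← mul_sum]
      ring

theorem exists_norm_eq_sum_eq_zero_s12 {ι : Type*} [Fintype ι] (ℓ : ι → ℝ) (hℓ : ∀ i, 0 ≤ ℓ i)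
    (hpoly : ∀ i, 2 * ℓ i ≤ ∑ j, ℓ j) : ∃ w : ι → ℂ, (∀ i, ‖w i‖ = ℓ i) ∧ ∑ i, w i = 0 := by
  classical
  obtain ⟨w, hw, hws⟩ := exists_norm_eq_sum_eq_ofReal Finset.univ ℓ (fun i _ ↦ hℓ i) le_rfl
    (Finset.sum_nonneg fun i _ ↦ hℓ i) (by simpa using hpoly)
  exact ⟨w, fun i ↦ hw i (Finset.mem_univ i), by simpa using hws⟩

end Complex

namespace ProbabilityTheory

open Matrix WithLp
open scoped RealInnerProductSpace

variable {ι : Type*} [Fintype ι] [DecidableEq ι] {μ : EuclideanSpace ℝ ι} {S : Matrix ι ι ℝ}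

lemma map_inner_multivariateGaussian (hS : S.PosSemidef) (a : EuclideanSpace ℝ ι) :
    (multivariateGaussian μ S).map (fun x ↦ ⟪a, x⟫) =
      gaussianReal ⟪a, μ⟫ (a ⬝ᵥ S *ᵥ a).toNNReal := by
  have h := IsGaussian.map_eq_gaussianReal (μ := multivariateGaussian μ S) (innerSL ℝ a)
  rw [ContinuousLinearMap.integral_comp_id_comm IsGaussian.integrable_id] at h
  rw [← covarianceBilin_multivariateGaussian hS, covarianceBilin_self IsGaussian.memLp_two_id]
  simpa using h

lemma map_dotProduct_map_ofLp_multivariateGaussian (hS : S.PosSemidef) (a : ι → ℝ) :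
    ((multivariateGaussian μ S).map ofLp).map (a ⬝ᵥ ·) =
      gaussianReal (a ⬝ᵥ ofLp μ) (a ⬝ᵥ S *ᵥ a).toNNReal := by
  rw [Measure.map_map (by fun_prop) (by fun_prop)]
  convert map_inner_multivariateGaussian (μ := μ) hS (toLp 2 a) using 2
  · ext x
    simp [EuclideanSpace.inner_eq_star_dotProduct, dotProduct_comm]
  · simp [EuclideanSpace.inner_eq_star_dotProduct, dotProduct_comm]

lemma map_ofLp_multivariateGaussian_setOf_dotProduct_eq (hS : S.PosSemidef) {a : ι → ℝ}
    (ha : a ⬝ᵥ S *ᵥ a = 0) :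
    (multivariateGaussian μ S).map ofLp {y | a ⬝ᵥ y = a ⬝ᵥ ofLp μ} = 1 := by
  change (multivariateGaussian μ S).map ofLp ((a ⬝ᵥ ·) ⁻¹' {a ⬝ᵥ ofLp μ}) = 1
  rw [← Measure.map_apply (by fun_prop) (measurableSet_singleton _),
    map_dotProduct_map_ofLp_multivariateGaussian hS, ha]
  simp

end ProbabilityTheory

open Matrix WithLp in
theorem stmt12_general (n : ℕ) (m : Fin n → ℝ) (σ : Fin n → ℝ) (hσ : ∀ i, 0 < σ i)
    (hmix : 2 * (⨆ i, σ i) ≤ ∑ i, σ i) :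
    ∃ ν : Measure (Fin n → ℝ), IsProbabilityMeasure ν ∧
      (∀ a : Fin n → ℝ, ∃ (c : ℝ) (v : NNReal),
        ν.map (fun y => ∑ i, a i * y i) = gaussianReal c v) ∧
      (∀ i, ν.map (fun y => y i) = gaussianReal (m i) ((σ i ^ 2).toNNReal)) ∧
      ν {y | ∑ i, y i = ∑ i, m i} = 1 := by
  have hpoly (i : Fin n) : 2 * σ i ≤ ∑ j, σ j :=
    le_trans (by gcongr; exact le_ciSup (Set.finite_range σ).bddAbove i) hmix
  obtain ⟨w, hw, hw₀⟩ := Complex.exists_norm_eq_sum_eq_zero_s12 σ (fun i ↦ (hσ i).le) hpoly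
  have hS : (gram ℝ w).PosSemidef := posSemidef_gram ℝ w
  have hdiag (i : Fin n) : gram ℝ w i i = σ i ^ 2 := by
    rw [gram_apply, real_inner_self_eq_norm_sq, hw]
  have hsum : 1 ⬝ᵥ gram ℝ w *ᵥ 1 = 0 := by
    simpa [hw₀] using star_dotProduct_gram_mulVec (𝕜 := ℝ) w 1 1
  refine ⟨(multivariateGaussian (toLp 2 m) (gram ℝ w)).map ofLp,
    Measure.isProbabilityMeasure_map (by fun_prop),
    fun a ↦ ⟨_, _, map_dotProduct_map_ofLp_multivariateGaussian hS a⟩, fun i ↦ ?_, ?_⟩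
  · rw [Measure.map_map (by fun_prop) (by fun_prop), ← hdiag]
    exact (measurePreserving_eval_multivariateGaussian hS).map_eq
  · simpa [one_dotProduct] using
      map_ofLp_multivariateGaussian_setOf_dotProduct_eq (μ := toLp 2 m) hS hsum

/-- Normal distributions `N(μ i, σ i ^ 2)` with `∑ σ i ≥ 2 max σ i` are jointly mixable:
there is a jointly Gaussian coupling whose sum is a.s. constant. -/
theorem stmt12 (n : ℕ) (hn : 2 ≤ n) (m : Fin n → ℝ) (σ : Fin n → ℝ) (hσ : ∀ i, 0 < σ i)
    (hmix : 2 * (⨆ i, σ i) ≤ ∑ i, σ i) :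
    ∃ ν : Measure (Fin n → ℝ), IsProbabilityMeasure ν ∧
      (∀ a : Fin n → ℝ, ∃ (c : ℝ) (v : NNReal),
        ν.map (fun y => ∑ i, a i * y i) = gaussianReal c v) ∧
      (∀ i, ν.map (fun y => y i) = gaussianReal (m i) ((σ i ^ 2).toNNReal)) ∧
      ν {y | ∑ i, y i = ∑ i, m i} = 1 :=
  stmt12_general n m σ hσ hmix
end

section
/- Let $\lambda > 0$ and let $X_\lambda$ have the skew-normal distribution $SN(0,1,\lambda)$, with stochastic representation $X_\lambda = \tfrac{\lambda}{\sqrt{1+\lambda^2}}|U| + \tfrac{1}{\sqrt{1+\lambda^2}}V$ where $U, V$ are independent standard normal, and mean $E(X_\lambda) = \tfrac{\lambda}{\sqrt{1+\lambda^2}}\sqrt{2/\pi}$. Then for every $n \ge 2$ there exists $\lambda_0 > 0$ such that for all $\lambda > \lambda_0$: for any random variables $X_1,\dots,X_n$ on a common probability space each distributed as $SN(0,1,\lambda)$, $P(X_1+\cdots+X_n = nE(X_\lambda)) < 1$; i.e., $SN(0,1,\lambda)$ is not $n$-completely mixable. -/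
/-!
If `X₁ + ⋯ + Xₙ ≤ c` then either `X₁ ≤ c` or some `Xᵢ` is negative, so the sum can only be
almost surely `≤ c` when `P(X ≤ c) + n P(X < 0) ≥ 1`. For `SN(0,1,λ)` and `c = n E(X_λ) ≤ n`,
`P(X > n)` stays bounded below as `λ → ∞` (Henze's representation with `|U| > 2n`, `V ≥ 0`),
while `P(X < 0) = P(λ|U| + V < 0) → 0` by continuity from above, since `⋂_λ {λ|U| + V < 0}`
lies in the null set `{U = 0}`.
-/

open MeasureTheory ProbabilityTheory

/-- The law of the skew-normal `SN(0,1,λ)` via Henze's representation. -/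
noncomputable def skewNormalLaw (l : ℝ) : Measure ℝ :=
  ((gaussianReal 0 1).prod (gaussianReal 0 1)).map
    (fun p => l / Real.sqrt (1 + l ^ 2) * |p.1| + 1 / Real.sqrt (1 + l ^ 2) * p.2)

open Set Filter Topology
open scoped ENNReal NNReal

theorem measure_sum_le_lt_one {Ω : Type*} [MeasurableSpace Ω] {μ : Measure Ω}
    [IsProbabilityMeasure μ] {n : ℕ} [NeZero n] {X : Fin n → Ω → ℝ}
    (hX : ∀ i, AEMeasurable (X i) μ) {ν : Measure ℝ} (hXν : ∀ i, μ.map (X i) = ν) {c : ℝ}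
    (hν : n * ν (Iio 0) < ν (Ioi c)) :
    μ {ω | ∑ i, X i ω ≤ c} < 1 := by
  have hlaw : ∀ i s, MeasurableSet s → μ (X i ⁻¹' s) = ν s := fun i s hs => by
    rw [← hXν i, Measure.map_apply_of_aemeasurable (hX i) hs]
  have : IsProbabilityMeasure ν := hXν 0 ▸ Measure.isProbabilityMeasure_map (hX 0)
  have hsub : {ω | ∑ i, X i ω ≤ c} ⊆ X 0 ⁻¹' Iic c ∪ ⋃ i, X i ⁻¹' Iio 0 := by
    intro ω hω
    by_contra hcon
    simp only [mem_union, mem_iUnion, mem_preimage, mem_Iic, mem_Iio, not_or, not_exists,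
      not_lt, not_le] at hcon
    have : X 0 ω ≤ ∑ i, X i ω := Finset.single_le_sum (fun i _ => hcon.2 i) (Finset.mem_univ 0)
    exact (hω.trans_lt hcon.1).not_ge this
  calc μ {ω | ∑ i, X i ω ≤ c}
      ≤ μ (X 0 ⁻¹' Iic c) + ∑ i, μ (X i ⁻¹' Iio 0) :=
        (measure_mono hsub).trans <| (measure_union_le _ _).trans <| by
          gcongr; exact measure_iUnion_fintype_le μ _
    _ = ν (Iic c) + n * ν (Iio 0) := by
        simp [hlaw _ _ measurableSet_Iic, hlaw _ _ measurableSet_Iio]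
    _ < ν (Iic c) + ν (Ioi c) := ENNReal.add_lt_add_left (measure_ne_top _ _) hν
    _ = 1 := by rw [← compl_Iic, measure_add_measure_compl measurableSet_Iic, measure_univ]

theorem gaussianReal_pos_of_volume_pos (m : ℝ) {v : ℝ≥0} (hv : v ≠ 0) {s : Set ℝ}
    (hs : 0 < volume s) : 0 < gaussianReal m v s :=
  pos_iff_ne_zero.2 fun h => hs.ne' (gaussianReal_absolutelyContinuous' m hv h)

theorem skewNormalLaw_apply (l : ℝ) {s : Set ℝ} (hs : MeasurableSet s) :
    skewNormalLaw l s = ((gaussianReal 0 1).prod (gaussianReal 0 1))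
      {p | l / Real.sqrt (1 + l ^ 2) * |p.1| + 1 / Real.sqrt (1 + l ^ 2) * p.2 ∈ s} :=
  Measure.map_apply (by fun_prop) hs

theorem skewNormalLaw_Iio_zero (l : ℝ) :
    skewNormalLaw l (Iio 0) =
      ((gaussianReal 0 1).prod (gaussianReal 0 1)) {p | l * |p.1| + p.2 < 0} := by
  rw [skewNormalLaw_apply l measurableSet_Iio]
  congr 1
  ext p
  have hsqrt : 0 < Real.sqrt (1 + l ^ 2) := Real.sqrt_pos.2 (by positivity)
  have : l / Real.sqrt (1 + l ^ 2) * |p.1| + 1 / Real.sqrt (1 + l ^ 2) * p.2 =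
      (l * |p.1| + p.2) / Real.sqrt (1 + l ^ 2) := by ring
  simp only [mem_ofPred_eq, mem_Iio, this, div_neg_iff, hsqrt, hsqrt.not_gt, and_true, and_false,
    false_or]

theorem tendsto_skewNormalLaw_Iio_zero :
    Tendsto (fun l => skewNormalLaw l (Iio 0)) atTop (𝓝 0) := by
  simp only [skewNormalLaw_Iio_zero]
  set γ := gaussianReal 0 1
  have hmeas : ∀ l : ℝ, MeasurableSet {p : ℝ × ℝ | l * |p.1| + p.2 < 0} := fun l =>
    measurableSet_lt (by fun_prop) measurable_const
  have hanti : Antitone fun l : ℝ => {p : ℝ × ℝ | l * |p.1| + p.2 < 0} := fun l l' hll' p hp => by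
    simp only [mem_ofPred_eq] at hp ⊢
    nlinarith [abs_nonneg p.1]
  have hnull : (γ.prod γ) (⋂ l : ℝ, {p : ℝ × ℝ | l * |p.1| + p.2 < 0}) = 0 := by
    refine measure_mono_null (t := {0} ×ˢ univ) ?_ ?_
    · intro p hp
      simp only [mem_iInter, mem_ofPred_eq] at hp
      refine ⟨abs_eq_zero.1 (le_antisymm ?_ (abs_nonneg _)), mem_univ _⟩
      by_contra! h
      have := hp (-p.2 / |p.1|)
      rw [div_mul_cancel₀ _ h.ne'] at this
      linarith
    · rw [Measure.prod_prod, gaussianReal_absolutelyContinuous 0 one_ne_zero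
        (Real.volume_singleton (a := 0)), zero_mul]
  have := tendsto_measure_iInter_atTop (μ := γ.prod γ) (fun l => (hmeas l).nullMeasurableSet)
    hanti ⟨0, measure_ne_top _ _⟩
  rwa [hnull] at this

theorem half_le_div_sqrt_one_add_sq {l : ℝ} (hl : 1 ≤ l) : 1 / 2 ≤ l / Real.sqrt (1 + l ^ 2) := by
  rw [le_div_iff₀ (Real.sqrt_pos.2 (by positivity))]
  nlinarith [Real.sq_sqrt (show 0 ≤ 1 + l ^ 2 by positivity), Real.sqrt_nonneg (1 + l ^ 2)]

theorem skewNormal_mean_le_one (l : ℝ) :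
    l / Real.sqrt (1 + l ^ 2) * Real.sqrt (2 / Real.pi) ≤ 1 := by
  refine mul_le_one₀ ?_ (Real.sqrt_nonneg _) ?_
  · rw [div_le_one (Real.sqrt_pos.2 (by positivity))]
    exact (Real.lt_sqrt_of_sq_lt (by linarith)).le
  · rw [Real.sqrt_le_one, div_le_one Real.pi_pos]
    linarith [Real.pi_gt_three]

theorem gaussianReal_mul_le_skewNormalLaw_Ioi {l : ℝ} (hl : 1 ≤ l) (t : ℝ) :
    gaussianReal 0 1 (Ioi (2 * t)) * gaussianReal 0 1 (Ici 0) ≤ skewNormalLaw l (Ioi t) := by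
  rw [skewNormalLaw_apply l measurableSet_Ioi, ← Measure.prod_prod]
  refine measure_mono fun p ⟨hu, hv⟩ => ?_
  simp only [mem_Ioi, mem_Ici, mem_ofPred_eq] at hu hv ⊢
  have ha := half_le_div_sqrt_one_add_sq hl
  have hb : 0 ≤ 1 / Real.sqrt (1 + l ^ 2) := by positivity
  nlinarith [le_abs_self p.1, abs_nonneg p.1, mul_nonneg hb hv]

/-- Theorem 3.3: for each `n ≥ 2` the skew-normal `SN(0,1,λ)` is not `n`-completely mixable
for sufficiently large `λ`. -/
theorem stmt13 (n : ℕ) (hn : 2 ≤ n) :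
    ∃ l₀ : ℝ, 0 < l₀ ∧ ∀ l : ℝ, l₀ < l →
      ∀ (Ω : Type) (_ : MeasurableSpace Ω) (μ : Measure Ω) (_ : IsProbabilityMeasure μ)
        (X : Fin n → Ω → ℝ), (∀ i, Measurable (X i)) →
        (∀ i, μ.map (X i) = skewNormalLaw l) →
        μ {ω | ∑ i, X i ω = n * (l / Real.sqrt (1 + l ^ 2) * Real.sqrt (2 / Real.pi))} < 1 := by
  have : NeZero n := ⟨by omega⟩
  set ε := gaussianReal 0 1 (Ioi (2 * n : ℝ)) * gaussianReal 0 1 (Ici 0)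
  have hε : 0 < ε := ENNReal.mul_pos (gaussianReal_pos_of_volume_pos 0 one_ne_zero (by simp)).ne'
    (gaussianReal_pos_of_volume_pos 0 one_ne_zero (by simp)).ne'
  have hsmall : ∀ᶠ l in atTop, (n : ℝ≥0∞) * skewNormalLaw l (Iio 0) < ε := by
    have := ENNReal.Tendsto.const_mul tendsto_skewNormalLaw_Iio_zero
      (Or.inr (ENNReal.natCast_ne_top n))
    rw [mul_zero] at this
    exact this.eventually_lt_const hε
  obtain ⟨l₁, hl₁⟩ := eventually_atTop.1 hsmall
  refine ⟨max 1 l₁, one_pos.trans_le (le_max_left _ _), fun l hl Ω _ μ _ X hX hXν => ?_⟩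
  have hmixed : n * skewNormalLaw l (Iio 0) < skewNormalLaw l (Ioi n) :=
    (hl₁ l ((le_max_right _ _).trans hl.le)).trans_le <|
      gaussianReal_mul_le_skewNormalLaw_Ioi ((le_max_left _ _).trans hl.le) n
  refine (measure_mono fun ω hω => ?_).trans_lt
    (measure_sum_le_lt_one (fun i => (hX i).aemeasurable) hXν hmixed)
  exact (show _ = _ from hω).trans_le <|
    mul_le_of_le_one_right n.cast_nonneg (skewNormal_mean_le_one l)
end
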